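/- Let v_0 = r, v_1, …, v_k be vertices visited in order along a walk C in a graph that starts at r and traverses each edge of a spanning tree T_M exactly twice (once in each direction). Then Σ_{i=1}^{k} D(v_{i−1}, v_i) ≤ 2·w(T_M), where D denotes distance in T_M and w(T_M) is the total weight of T_M. -/

import Mathlib

/-!
Let `F n` be the weight of the first `n` steps of the walk. The stretch of the walk between the
positions of `v_{i-1}` and `v_i` is itself a walk, so `D(v_{i-1}, v_i) ≤ F (idx i) - F (idx (i-1))`.
The sum telescopes to `F (idx k) - F (idx 0)`, which is at most the weight of the whole walk,
and that is `2 w(T)` because the walk traverses each edge of `T` exactly twice.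
-/

open SimpleGraph Finset

noncomputable def walkWeight {V : Type*} {G : SimpleGraph V} (w : Sym2 V → ℝ)
    {u v : V} (p : G.Walk u v) : ℝ :=
  (p.edges.map w).sum

noncomputable def wdist {V : Type*} (G : SimpleGraph V) (w : Sym2 V → ℝ) (u v : V) : ℝ :=
  sInf {x | ∃ p : G.Walk u v, walkWeight w p = x}

open scoped Classical in
noncomputable def gweight {V : Type*} [Fintype V] (G : SimpleGraph V) (w : Sym2 V → ℝ) : ℝ :=
  ∑ e ∈ G.edgeSet.toFinset, w e

theorem Finset.sum_Icc_one_sub_pred {M : Type*} [AddCommGroup M] (f : ℕ → M) (k : ℕ) :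
    ∑ i ∈ Icc 1 k, (f i - f (i - 1)) = f k - f 0 := by
  induction k with
  | zero => simp
  | succ k ih =>
    rw [sum_Icc_succ_top (by omega), ih, Nat.add_sub_cancel]
    abel

section WalkWeight

variable {V : Type*} {G : SimpleGraph V} {w : Sym2 V → ℝ} {u v : V}

lemma walkWeight_nonneg (hw : ∀ e, 0 ≤ w e) (p : G.Walk u v) : 0 ≤ walkWeight w p :=
  List.sum_nonneg (by simpa using fun e _ => hw e)

lemma wdist_le_walkWeight (hw : ∀ e, 0 ≤ w e) (p : G.Walk u v) :
    wdist G w u v ≤ walkWeight w p :=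
  csInf_le ⟨0, by rintro _ ⟨q, rfl⟩; exact walkWeight_nonneg hw q⟩ ⟨p, rfl⟩

lemma walkWeight_take_le (hw : ∀ e, 0 ≤ w e) (p : G.Walk u v) (n : ℕ) :
    walkWeight w (p.take n) ≤ walkWeight w p := by
  rw [walkWeight, walkWeight, Walk.edges_take, List.map_take]
  exact (List.take_sublist _ _).sum_le_sum (by simpa using fun e _ => hw e)

lemma wdist_getVert_le_walkWeight_take_sub (hw : ∀ e, 0 ≤ w e) (p : G.Walk u v) {a b : ℕ}
    (hab : a ≤ b) :
    wdist G w (p.getVert a) (p.getVert b) ≤ walkWeight w (p.take b) - walkWeight w (p.take a) := by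
  obtain ⟨n, rfl⟩ := Nat.exists_eq_add_of_le hab
  let q : G.Walk (p.getVert a) (p.getVert (a + n)) := ((p.drop a).take n).copy rfl (by simp)
  have hsplit : walkWeight w (p.take (a + n)) = walkWeight w (p.take a) + walkWeight w q := by
    simp [q, walkWeight, Walk.edges_take, Walk.edges_drop, List.take_add]
  linarith [wdist_le_walkWeight hw q]

lemma walkWeight_eq_mul_gweight [Fintype V] [DecidableEq V] (p : G.Walk u v) {n : ℕ}
    (hcount : ∀ e ∈ G.edgeSet, p.edges.count e = n) : walkWeight w p = n * gweight G w := by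
  classical
  have hsub : p.edges.toFinset ⊆ G.edgeSet.toFinset := fun e he => by
    simpa using p.edges_subset_edgeSet (List.mem_toFinset.mp he)
  rw [walkWeight, sum_list_map_count, gweight, mul_sum]
  calc ∑ e ∈ p.edges.toFinset, p.edges.count e • w e
      = ∑ e ∈ G.edgeSet.toFinset, p.edges.count e • w e :=
        sum_subset hsub fun e _ he => by simp [List.count_eq_zero.mpr (by simpa using he)]
    _ = ∑ e ∈ G.edgeSet.toFinset, n * w e :=
        sum_congr rfl fun e he => by simp [hcount e (by simpa using he)]

end WalkWeight

theorem tour_distance_sum_general {V : Type*} [Fintype V] [DecidableEq V]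
    (T : SimpleGraph V) (w : Sym2 V → ℝ) (hw : ∀ e, 0 ≤ w e)
    (r : V) (p : T.Walk r r)
    (htwice : ∀ e ∈ T.edgeSet, p.edges.count e = 2)
    (k : ℕ) (idx : ℕ → ℕ) (hmono : Monotone idx) :
    ∑ i ∈ Finset.Icc 1 k, wdist T w (p.getVert (idx (i - 1))) (p.getVert (idx i))
      ≤ 2 * gweight T w := by
  set F : ℕ → ℝ := fun n => walkWeight w (p.take (idx n))
  calc ∑ i ∈ Icc 1 k, wdist T w (p.getVert (idx (i - 1))) (p.getVert (idx i))
      ≤ ∑ i ∈ Icc 1 k, (F i - F (i - 1)) :=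
        sum_le_sum fun i _ => wdist_getVert_le_walkWeight_take_sub hw p (hmono (Nat.sub_le i 1))
    _ = F k - F 0 := sum_Icc_one_sub_pred F k
    _ ≤ walkWeight w p := by
        linarith [walkWeight_nonneg hw (p.take (idx 0)), walkWeight_take_le hw p (idx k)]
    _ = 2 * gweight T w := by exact_mod_cast walkWeight_eq_mul_gweight p htwice

/-- If `p` is a closed walk in a spanning tree `T` from the root that
traverses each edge of `T` exactly twice, and `v_0 = r, v_1, …, v_k` appear in this
order along the walk (at monotone positions `idx`), then the sum of consecutive tree
distances `Σ D(v_{i-1}, v_i)` is at most twice the weight of `T`. -/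
theorem tour_distance_sum {V : Type*} [Fintype V] [DecidableEq V]
    (T : SimpleGraph V) (hT : T.IsTree) (w : Sym2 V → ℝ) (hw : ∀ e, 0 ≤ w e)
    (r : V) (p : T.Walk r r)
    (htwice : ∀ e ∈ T.edgeSet, p.edges.count e = 2)
    (k : ℕ) (idx : ℕ → ℕ) (hmono : Monotone idx) (hidx0 : idx 0 = 0)
    (hidx : idx k ≤ p.length) :
    ∑ i ∈ Finset.Icc 1 k, wdist T w (p.getVert (idx (i - 1))) (p.getVert (idx i))
      ≤ 2 * gweight T w :=
  tour_distance_sum_general T w hw r p htwice k idx hmono
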